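/- Let x lie in the open unit disk of ℝ² and v ∈ ℝ², v ≠ 0, and write n := x_b(x,v). Then: (i) ∂_{x₂}(−2A¹_{v,x_b(x,v)}) = ∂_{x₁}(−2A²_{v,x_b(x,v)}), i.e. the x₂-partial of the first column of the map x ↦ −2A_{v,x_b(x,v)} equals the x₁-partial of its second column; and (ii) setting u := ∂_{x₂}(R¹_{x_b(x,v)}) − ∂_{x₁}(R²_{x_b(x,v)}) ∈ ℝ², a row vector w ∈ ℝ² satisfies w·u = 0 if and only if w is a scalar multiple of (R_n v)ᵀ. -/

import Mathlib

noncomputable section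

open Matrix Real Set

/-- The Euclidean plane ℝ². -/
abbrev E : Type := EuclideanSpace ℝ (Fin 2)

/-- Dot product on ℝ². -/
def dot (a b : E) : ℝ := a 0 * b 0 + a 1 * b 1

/-- Build a vector of ℝ² from its components. -/
def toE (f : Fin 2 → ℝ) : E := (WithLp.equiv 2 (Fin 2 → ℝ)).symm f

/-- Tensor (outer) product a⊗b, (a⊗b)_{ij} = aᵢ bⱼ. -/
def outer (a b : E) : Matrix (Fin 2) (Fin 2) ℝ := Matrix.of fun i j => a i * b j

/-- Matrix acting on a column vector. -/
def mulV (M : Matrix (Fin 2) (Fin 2) ℝ) (v : E) : E := toE fun i => M i 0 * v 0 + M i 1 * v 1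

/-- Row vector multiplied by a matrix on the right. -/
def vMulM (w : E) (M : Matrix (Fin 2) (Fin 2) ℝ) : E := toE fun j => w 0 * M 0 j + w 1 * M 1 j

/-- Specular reflection matrix R_n = I - 2 n⊗n. -/
def Rmat (n : E) : Matrix (Fin 2) (Fin 2) ℝ := 1 - (2 : ℝ) • outer n n

/-- The matrix A_{v,n} = ((v·n) I + n⊗v)(I - (v⊗n)/(v·n)). -/
def Amat (v n : E) : Matrix (Fin 2) (Fin 2) ℝ :=
  (dot v n • (1 : Matrix (Fin 2) (Fin 2) ℝ) + outer n v) *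
    (1 - (dot v n)⁻¹ • outer v n)

/-- Counterclockwise rotation by π/2. -/
def Qmat : Matrix (Fin 2) (Fin 2) ℝ := !![0, -1; 1, 0]

/-- Backward exit time from the closed unit disk. -/
def tb (x v : E) : ℝ := sSup {s : ℝ | 0 ≤ s ∧ ‖x - s • v‖ ≤ 1}

/-- Backward exit point from the closed unit disk. -/
def xb (x v : E) : E := x - tb x v • v

/-- The i-th column of a 2×2 matrix, as a vector of ℝ². -/
def colE (M : Matrix (Fin 2) (Fin 2) ℝ) (i : Fin 2) : E := toE fun k => M k i

/-- A 2×2 matrix as a continuous linear map ℝ² → ℝ². -/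
def toCLM (M : Matrix (Fin 2) (Fin 2) ℝ) : E →L[ℝ] E :=
  LinearMap.toContinuousLinearMap (Matrix.toEuclideanLin M)

/-!
Near `x` the exit point `n(y) = xb y v` is a smooth function of `y` with `‖n(y)‖ = 1` and
`y - n(y)` parallel to `v`, so differentiating `‖n‖² = 1` gives `Dn h = h - (⟪n, h⟫ / ⟪v, n⟫) v`.
With this, `A_{v,n(y)}` is exactly the Jacobian of `y ↦ ⟪v, n(y)⟫ n(y)`, so (i) is the symmetry of
second derivatives. For (ii), differentiating `R = I - 2 n ⊗ n` gives
`u = -2 (Q n + (⟪Q n, v⟫ / ⟪v, n⟫) n)` with `Q` the quarter turn; `u` is nonzero and orthogonal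
to `R_n v ≠ 0`, and in the plane the orthogonal complement of a nonzero vector is a line.
-/

open scoped RealInnerProductSpace Topology

lemma fderiv_fderiv_apply_comm {F G : Type*} [NormedAddCommGroup F] [NormedSpace ℝ F]
    [NormedAddCommGroup G] [NormedSpace ℝ G] {f : F → G} {x : F} (hf : ContDiffAt ℝ 2 f x)
    (u w : F) :
    fderiv ℝ (fun y => fderiv ℝ f y u) x w = fderiv ℝ (fun y => fderiv ℝ f y w) x u := by
  have hdiff : DifferentiableAt ℝ (fderiv ℝ f) x :=
    (hf.fderiv_right (m := 1) le_rfl).differentiableAt one_ne_zero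
  rw [fderiv_clm_apply hdiff (differentiableAt_const u),
    fderiv_clm_apply hdiff (differentiableAt_const w)]
  simpa using hf.isSymmSndFDerivAt (by simp) w u

section InnerProductSpace

variable {F : Type*} [NormedAddCommGroup F] [InnerProductSpace ℝ F]

lemma inner_eq_zero_iff_exists_eq_smul (hF : Module.finrank ℝ F = 2) {u r : F} (hu : u ≠ 0)
    (hr : r ≠ 0) (hru : ⟪r, u⟫ = 0) (w : F) : ⟪w, u⟫ = 0 ↔ ∃ c : ℝ, w = c • r := by
  have : Fact (Module.finrank ℝ F = 1 + 1) := ⟨hF⟩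
  have hline : Module.finrank ℝ (ℝ ∙ u)ᗮ = 1 := Submodule.finrank_orthogonal_span_singleton hu
  have hrK : r ∈ (ℝ ∙ u)ᗮ :=
    Submodule.mem_orthogonal_singleton_iff_inner_right.2 (by rwa [real_inner_comm])
  constructor
  · intro hw
    have hwK : w ∈ (ℝ ∙ u)ᗮ :=
      Submodule.mem_orthogonal_singleton_iff_inner_right.2 (by rwa [real_inner_comm])
    obtain ⟨c, hc⟩ := (finrank_eq_one_iff_of_nonzero' (⟨r, hrK⟩ : (ℝ ∙ u)ᗮ)
      (by simpa using hr)).1 hline ⟨w, hwK⟩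
    exact ⟨c, (congrArg Subtype.val hc).symm⟩
  · rintro ⟨c, rfl⟩
    rw [inner_smul_left, hru, mul_zero]

def obliqueProj (v n : F) : F →L[ℝ] F :=
  ContinuousLinearMap.id ℝ F - ⟪v, n⟫⁻¹ • (innerSL ℝ n).smulRight v

lemma obliqueProj_apply (v n h : F) : obliqueProj v n h = h - (⟪n, h⟫ / ⟪v, n⟫) • v := by
  simp [obliqueProj, smul_smul, div_eq_inv_mul]

/-- Differentiating `‖y - τ y • v‖² = 1` determines the derivative of `τ`. -/
lemma hasFDerivAt_sub_smul_of_norm_eq_one {τ : F → ℝ} {x v : F} (hτ : DifferentiableAt ℝ τ x)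
    (hnorm : ∀ᶠ y in 𝓝 x, ‖y - τ y • v‖ = 1) (hvn : ⟪v, x - τ x • v⟫ ≠ 0) :
    HasFDerivAt (fun y => y - τ y • v) (obliqueProj v (x - τ x • v)) x := by
  have hf := (hasFDerivAt_id x).sub (hτ.hasFDerivAt.smul_const v)
  have hconst : HasFDerivAt (fun y => ‖y - τ y • v‖ ^ 2) (0 : F →L[ℝ] ℝ) x :=
    (hasFDerivAt_const 1 x).congr_of_eventuallyEq (hnorm.mono fun y hy => by simp [hy])
  have horth := hf.norm_sq.unique hconst
  refine hf.congr_fderiv (ContinuousLinearMap.ext fun h => ?_)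
  have hh := congrArg (· h) horth
  simp only [_root_.smul_apply, ContinuousLinearMap.comp_apply, innerSL_apply_apply,
    _root_.sub_apply, ContinuousLinearMap.id_apply, ContinuousLinearMap.smulRight_apply,
    inner_sub_right, inner_smul_right, _root_.zero_apply, nsmul_eq_mul, Pi.sub_apply, id_eq,
    Nat.cast_ofNat] at hh
  rw [obliqueProj_apply, _root_.sub_apply, ContinuousLinearMap.smulRight_apply,
    ContinuousLinearMap.id_apply]
  congr 2
  rw [eq_div_iff hvn, real_inner_comm]
  linarith

lemma norm_sub_smul_sq (y v : F) (s : ℝ) :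
    ‖y - s • v‖ ^ 2 = ‖v‖ ^ 2 * s ^ 2 - 2 * ⟪v, y⟫ * s + ‖y‖ ^ 2 := by
  rw [norm_sub_sq_real, norm_smul, inner_smul_right, real_inner_comm, Real.norm_eq_abs,
    mul_pow, sq_abs]
  ring

def exitDiscr (v y : F) : ℝ := ⟪v, y⟫ ^ 2 + (1 - ‖y‖ ^ 2) * ‖v‖ ^ 2

/-- The larger root `s` of the quadratic equation `‖y - s • v‖ = 1`. -/
def exitTime (v y : F) : ℝ := (⟪v, y⟫ + √(exitDiscr v y)) / ‖v‖ ^ 2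

variable {v y : F}

lemma exitDiscr_pos (hv : v ≠ 0) (hy : ‖y‖ < 1) : 0 < exitDiscr v y := by
  have : ‖y‖ ^ 2 < 1 := by nlinarith [norm_nonneg y]
  have := norm_pos_iff.2 hv
  unfold exitDiscr
  positivity

lemma norm_sub_exitTime_smul (hv : v ≠ 0) (hy : ‖y‖ < 1) : ‖y - exitTime v y • v‖ = 1 := by
  have hsq : √(exitDiscr v y) ^ 2 = exitDiscr v y := Real.sq_sqrt (exitDiscr_pos hv hy).le
  have hm : ‖v‖ ≠ 0 := norm_ne_zero_iff.2 hv
  refine (pow_eq_one_iff_of_nonneg (norm_nonneg _) two_ne_zero).1 ?_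
  rw [norm_sub_smul_sq, exitTime]
  generalize √(exitDiscr v y) = S at hsq
  unfold exitDiscr at hsq
  field_simp
  linear_combination hsq

lemma inner_sub_exitTime_smul (hv : v ≠ 0) :
    ⟪v, y - exitTime v y • v⟫ = -√(exitDiscr v y) := by
  have hm : ‖v‖ ≠ 0 := norm_ne_zero_iff.2 hv
  rw [inner_sub_right, inner_smul_right, real_inner_self_eq_norm_sq, exitTime]
  field_simp
  ring

lemma contDiffAt_exitTime (hv : v ≠ 0) (hy : ‖y‖ < 1) : ContDiffAt ℝ ⊤ (exitTime v) y := by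
  have hinner : ContDiff ℝ ⊤ (fun z : F => ⟪v, z⟫) := contDiff_const.inner ℝ contDiff_id
  have hdiscr : ContDiff ℝ ⊤ (exitDiscr v) :=
    (hinner.pow 2).add ((contDiff_const.sub (contDiff_norm_sq ℝ)).mul contDiff_const)
  exact (hinner.contDiffAt.add (hdiscr.contDiffAt.sqrt (exitDiscr_pos hv hy).ne')).div_const _

end InnerProductSpace

section Coordinates

lemma dot_eq_inner (a b : E) : dot a b = ⟪a, b⟫ := by
  simp [dot, PiLp.inner_apply, Fin.sum_univ_two, mul_comm]

lemma inner_eq_coords (a b : E) : ⟪a, b⟫ = a 0 * b 0 + a 1 * b 1 := by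
  rw [← dot_eq_inner, dot]

lemma colE_eq_toCLM (M : Matrix (Fin 2) (Fin 2) ℝ) (j : Fin 2) :
    colE M j = toCLM M (EuclideanSpace.single j 1) := by
  ext k
  fin_cases j <;> simp [colE, toE, toCLM, Matrix.toEuclideanLin, Matrix.mulVec, dotProduct]

lemma colE_smul (c : ℝ) (M : Matrix (Fin 2) (Fin 2) ℝ) (j : Fin 2) :
    colE (c • M) j = c • colE M j := by
  ext k
  simp [colE, toE]

lemma toCLM_Amat_apply (v n h : E) :
    toCLM (Amat v n) h = ⟪v, obliqueProj v n h⟫ • n + ⟪v, n⟫ • obliqueProj v n h := by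
  ext k
  fin_cases k <;>
  · simp [toCLM, Amat, outer, dot, obliqueProj_apply, inner_eq_coords, Matrix.toEuclideanLin,
      Matrix.mulVec, dotProduct, Fin.sum_univ_two]
    ring

lemma colE_Rmat (n : E) (j : Fin 2) :
    colE (Rmat n) j = EuclideanSpace.single j 1 - (2 * n j) • n := by
  ext k
  fin_cases j <;> fin_cases k <;> simp [colE, toE, Rmat, outer, Matrix.one_apply] <;> ring

lemma mulV_Rmat (n v : E) : mulV (Rmat n) v = v - (2 * ⟪n, v⟫) • n := by
  ext k
  fin_cases k <;> simp [mulV, toE, Rmat, outer, inner_eq_coords, Matrix.one_apply] <;> ring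

lemma norm_mulV_Rmat {n : E} (hn : ‖n‖ = 1) (v : E) : ‖mulV (Rmat n) v‖ = ‖v‖ := by
  have h := norm_sub_smul_sq v n (2 * ⟪n, v⟫)
  rw [hn] at h
  rw [mulV_Rmat, ← pow_left_inj₀ (norm_nonneg _) (norm_nonneg _) two_ne_zero, h]
  ring

lemma inner_mulV_Qmat_right (n : E) : ⟪n, mulV Qmat n⟫ = 0 := by
  simp [inner_eq_coords, mulV, Qmat, toE]
  ring

lemma inner_mulV_Qmat_self (n : E) : ⟪mulV Qmat n, mulV Qmat n⟫ = ⟪n, n⟫ := by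
  rw [inner_eq_coords, inner_eq_coords]
  simp [mulV, Qmat, toE]
  ring

lemma mulV_Qmat_add_smul_ne_zero {n : E} (hn : ‖n‖ = 1) (c : ℝ) : mulV Qmat n + c • n ≠ 0 := by
  have h1 : ⟪mulV Qmat n, mulV Qmat n + c • n⟫ = 1 := by
    rw [inner_add_right, inner_smul_right, inner_mulV_Qmat_self, real_inner_comm n (mulV Qmat n),
      inner_mulV_Qmat_right, real_inner_self_eq_norm_sq, hn]
    norm_num
  intro h
  rw [h, inner_zero_right] at h1
  exact zero_ne_one h1

lemma inner_mulV_Rmat_mulV_Qmat_add_smul {v n : E} (hn : ‖n‖ = 1) (hvn : ⟪v, n⟫ ≠ 0) :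
    ⟪mulV (Rmat n) v, mulV Qmat n + (⟪mulV Qmat n, v⟫ / ⟪v, n⟫) • n⟫ = 0 := by
  rw [mulV_Rmat, inner_sub_left, inner_add_right, inner_add_right, real_inner_smul_left,
    real_inner_smul_left, inner_smul_right, inner_smul_right, inner_mulV_Qmat_right,
    real_inner_self_eq_norm_sq, hn, real_inner_comm v, real_inner_comm v n]
  field_simp
  ring

end Coordinates

section ExitPoint

variable {v y : E}

lemma tb_eq_exitTime (hv : v ≠ 0) (hy : ‖y‖ < 1) : tb y v = exitTime v y := by
  have hm : 0 < ‖v‖ ^ 2 := by positivity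
  have hb := Real.abs_le_sqrt (show ⟪v, y⟫ ^ 2 ≤ exitDiscr v y by
    unfold exitDiscr; nlinarith [pow_le_one₀ (n := 2) (norm_nonneg y) hy.le])
  refine IsGreatest.csSup_eq ⟨⟨?_, (norm_sub_exitTime_smul hv hy).le⟩, ?_⟩
  · exact div_nonneg (by linarith [neg_abs_le ⟪v, y⟫]) hm.le
  · rintro s ⟨-, hs⟩
    have hs2 : (‖v‖ ^ 2 * s - ⟪v, y⟫) ^ 2 ≤ exitDiscr v y := by
      have := norm_sub_smul_sq y v s
      unfold exitDiscr
      nlinarith [pow_le_one₀ (n := 2) (norm_nonneg (y - s • v)) hs]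
    rw [exitTime, le_div_iff₀ hm]
    linarith [le_abs_self (‖v‖ ^ 2 * s - ⟪v, y⟫), Real.abs_le_sqrt hs2]

lemma xb_eventuallyEq (hv : v ≠ 0) (hy : ‖y‖ < 1) :
    (fun z => xb z v) =ᶠ[𝓝 y] fun z => z - exitTime v z • v := by
  filter_upwards [(isOpen_lt continuous_norm continuous_const).mem_nhds hy] with z hz
  rw [xb, tb_eq_exitTime hv hz]

lemma norm_xb (hv : v ≠ 0) (hy : ‖y‖ < 1) : ‖xb y v‖ = 1 := by
  rw [(xb_eventuallyEq hv hy).eq_of_nhds, norm_sub_exitTime_smul hv hy]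

lemma inner_xb_neg (hv : v ≠ 0) (hy : ‖y‖ < 1) : ⟪v, xb y v⟫ < 0 := by
  rw [(xb_eventuallyEq hv hy).eq_of_nhds, inner_sub_exitTime_smul hv, neg_neg_iff_pos]
  exact Real.sqrt_pos.2 (exitDiscr_pos hv hy)

lemma contDiffAt_xb (hv : v ≠ 0) (hy : ‖y‖ < 1) : ContDiffAt ℝ ⊤ (fun z => xb z v) y :=
  (contDiffAt_id.sub ((contDiffAt_exitTime hv hy).smul contDiffAt_const)).congr_of_eventuallyEq
    (xb_eventuallyEq hv hy)

lemma hasFDerivAt_xb (hv : v ≠ 0) (hy : ‖y‖ < 1) :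
    HasFDerivAt (fun z => xb z v) (obliqueProj v (xb y v)) y := by
  have hnorm : ∀ᶠ z in 𝓝 y, ‖z - exitTime v z • v‖ = 1 := by
    filter_upwards [(isOpen_lt continuous_norm continuous_const).mem_nhds hy] with z hz
    exact norm_sub_exitTime_smul hv hz
  have hxb : xb y v = y - exitTime v y • v := (xb_eventuallyEq hv hy).eq_of_nhds
  rw [hxb]
  exact (hasFDerivAt_sub_smul_of_norm_eq_one ((contDiffAt_exitTime hv hy).differentiableAt
    (by simp)) hnorm (hxb ▸ (inner_xb_neg hv hy).ne)).congr_of_eventuallyEq (xb_eventuallyEq hv hy)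

lemma hasFDerivAt_inner_smul_xb (hv : v ≠ 0) (hy : ‖y‖ < 1) :
    HasFDerivAt (fun z => ⟪v, xb z v⟫ • xb z v) (toCLM (Amat v (xb y v))) y := by
  have hxb := hasFDerivAt_xb hv hy
  refine ((hasFDerivAt_const v y).inner ℝ hxb |>.smul hxb).congr_fderiv ?_
  ext1 h
  simp [toCLM_Amat_apply, add_comm]

lemma fderiv_colE_smul_Amat_xb_comm (hv : v ≠ 0) (hy : ‖y‖ < 1) (c : ℝ) (i j : Fin 2) :
    fderiv ℝ (fun z => colE (c • Amat v (xb z v)) j) y (EuclideanSpace.single i 1) =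
      fderiv ℝ (fun z => colE (c • Amat v (xb z v)) i) y (EuclideanSpace.single j 1) := by
  set g : E → E := fun z => c • (⟪v, xb z v⟫ • xb z v)
  have hcol (k : Fin 2) :
      (fun z => colE (c • Amat v (xb z v)) k) =ᶠ[𝓝 y]
        fun z => fderiv ℝ g z (EuclideanSpace.single k 1) := by
    filter_upwards [(isOpen_lt continuous_norm continuous_const).mem_nhds hy] with z hz
    have hgz : HasFDerivAt g (c • toCLM (Amat v (xb z v))) z :=
      (hasFDerivAt_inner_smul_xb hv hz).const_smul c
    rw [hgz.fderiv, colE_smul, colE_eq_toCLM]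
    rfl
  have hg : ContDiffAt ℝ 2 g y :=
    ((contDiffAt_const.inner ℝ (contDiffAt_xb hv hy)).smul (contDiffAt_xb hv hy)).const_smul c
      |>.of_le le_top
  rw [(hcol j).fderiv_eq, (hcol i).fderiv_eq]
  exact fderiv_fderiv_apply_comm hg _ _

lemma fderiv_colE_Rmat_xb_apply (hv : v ≠ 0) (hy : ‖y‖ < 1) (j : Fin 2) (h : E) :
    fderiv ℝ (fun z => colE (Rmat (xb z v)) j) y h =
      -((2 * xb y v j) • obliqueProj v (xb y v) h + (2 * obliqueProj v (xb y v) h j) • xb y v) := by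
  have hxb := hasFDerivAt_xb hv hy
  have hcoord := (EuclideanSpace.proj j : E →L[ℝ] ℝ).hasFDerivAt.comp y hxb
  have hcol : HasFDerivAt (fun z => EuclideanSpace.single j 1 - (2 * xb z v j) • xb z v) _ y :=
    ((hcoord.const_mul 2).smul hxb).const_sub _
  simp only [colE_Rmat]
  rw [hcol.fderiv]
  simp

lemma curl_colE_Rmat_xb (hv : v ≠ 0) (hy : ‖y‖ < 1) :
    fderiv ℝ (fun z => colE (Rmat (xb z v)) 0) y (EuclideanSpace.single 1 1) -
        fderiv ℝ (fun z => colE (Rmat (xb z v)) 1) y (EuclideanSpace.single 0 1) =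
      (-2 : ℝ) • (mulV Qmat (xb y v) + (⟪mulV Qmat (xb y v), v⟫ / ⟪v, xb y v⟫) • xb y v) := by
  rw [fderiv_colE_Rmat_xb_apply hv hy, fderiv_colE_Rmat_xb_apply hv hy]
  ext k
  fin_cases k <;>
  · simp [obliqueProj_apply, inner_eq_coords, mulV, Qmat, toE]
    ring

end ExitPoint

/-- symmetry ∂_{x₂}(−2A¹) = ∂_{x₁}(−2A²) along the exit point,
    and w·(∂_{x₂}R¹ − ∂_{x₁}R²) = 0 iff w ∥ (R_n v)ᵀ. -/
theorem stmt12 (x v : E) (hx : ‖x‖ < 1) (hv : v ≠ 0) :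
    let n := xb x v
    let e : Fin 2 → E := fun j => EuclideanSpace.single j 1
    fderiv ℝ (fun y => colE ((-2 : ℝ) • Amat v (xb y v)) 0) x (e 1) =
      fderiv ℝ (fun y => colE ((-2 : ℝ) • Amat v (xb y v)) 1) x (e 0) ∧
    (∀ w : E,
      dot w (fderiv ℝ (fun y => colE (Rmat (xb y v)) 0) x (e 1) -
             fderiv ℝ (fun y => colE (Rmat (xb y v)) 1) x (e 0)) = 0 ↔
        ∃ c : ℝ, w = c • mulV (Rmat n) v) := by
  intro n e
  refine ⟨fderiv_colE_smul_Amat_xb_comm hv hx (-2) 1 0, fun w => ?_⟩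
  have hn : ‖n‖ = 1 := norm_xb hv hx
  have hvn : ⟪v, n⟫ ≠ 0 := (inner_xb_neg hv hx).ne
  rw [dot_eq_inner, curl_colE_Rmat_xb hv hx]
  refine inner_eq_zero_iff_exists_eq_smul finrank_euclideanSpace_fin
    (smul_ne_zero (by norm_num) (mulV_Qmat_add_smul_ne_zero hn _)) ?_ ?_ w
  · rw [← norm_ne_zero_iff, norm_mulV_Rmat hn]
    exact norm_ne_zero_iff.2 hv
  · rw [inner_smul_right, inner_mulV_Rmat_mulV_Qmat_add_smul hn hvn, mul_zero]
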